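/- arXiv:0806.3163 — 3 statements merged into one kernel-verified Lean document; each statement's English description precedes it below -/
import Mathlib

section
/- For a prime p ≥ 5, any positive integer n, and Re(s) > 0: Σ_{k=1}^∞ (k/p) c_k(n) / k^{1+s} = p^{1+s} (Σ_{d|n} (d/p) d^{−s}) / (Σ_{j=1}^{p−1} (j/p) ζ(1+s, j/p)), where ζ(s,a) is the Hurwitz zeta function. -/
open Complex

/-- The Ramanujan sum `c_k(n) = ∑_{1 ≤ h ≤ k, gcd(h,k)=1} exp(2πihn/k)`. -/
noncomputable def ramanujanSum (k n : ℕ) : ℂ :=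
  ∑ h ∈ (Finset.Icc 1 k).filter (fun h => Nat.gcd h k = 1),
    Complex.exp (2 * ↑Real.pi * I * h * n / k)

/-- The Hurwitz zeta function `ζ(s,a) = ∑_{n ≥ 0} (n+a)^{-s}` (as a `tsum`). -/
noncomputable def hurwitzZetaSum (s a : ℂ) : ℂ := ∑' n : ℕ, ((n : ℂ) + a) ^ (-s)

section aux

open LSeries Finset
open scoped LSeries.notation

noncomputable def legChar (p : ℕ) [Fact p.Prime] : DirichletCharacter ℂ p :=
  (quadraticChar (ZMod p)).ringHomComp (Int.castRingHom ℂ)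

lemma legChar_apply (p : ℕ) [Fact p.Prime] (k : ℕ) :
    legChar p (k : ZMod p) = (legendreSym p k : ℂ) := by
  simp [legChar, legendreSym, MulChar.ringHomComp]

lemma sum_exp_full (k n : ℕ) (hk : 0 < k) :
    ∑ h ∈ Finset.Icc 1 k, Complex.exp (2 * ↑Real.pi * I * h * n / k)
      = if k ∣ n then (k : ℂ) else 0 := by
  have hk' : (k : ℂ) ≠ 0 := Nat.cast_ne_zero.mpr hk.ne'
  set ω : ℂ := Complex.exp (2 * ↑Real.pi * I * n / k) with hω
  have hexp : ∀ h : ℕ, Complex.exp (2 * ↑Real.pi * I * h * n / k) = ω ^ h := by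
    intro h
    rw [hω, ← Complex.exp_nat_mul]
    ring_nf
  rw [Finset.sum_congr rfl (fun h _ => hexp h)]
  by_cases hdvd : k ∣ n
  · obtain ⟨m, rfl⟩ := hdvd
    have hω1 : ω = 1 := by
      rw [hω]
      have : 2 * ↑Real.pi * I * ↑(k * m) / ↑k = ↑m * (2 * ↑Real.pi * I) := by
        field_simp; push_cast; ring
      rw [this]
      simpa using Complex.exp_int_mul_two_pi_mul_I (m : ℤ)
    simp [hω1, Nat.card_Icc]
  · rw [if_neg hdvd]
    have hωk : ω ^ k = 1 := by
      rw [hω, ← Complex.exp_nat_mul]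
      have : (k : ℂ) * (2 * ↑Real.pi * I * ↑n / ↑k) = (n : ℂ) * (2 * ↑Real.pi * I) := by
        field_simp
      rw [this]
      exact_mod_cast Complex.exp_int_mul_two_pi_mul_I (n : ℤ)
    have hω1 : ω ≠ 1 := by
      intro h
      rw [hω, Complex.exp_eq_one_iff] at h
      obtain ⟨m, hm⟩ := h
      apply hdvd
      have h2 : (2 * ↑Real.pi * I : ℂ) ≠ 0 := by
        simp [Real.pi_ne_zero, Complex.I_ne_zero]
      have hnc : (n : ℂ) = m * k := by
        field_simp at hm
        calc (n : ℂ) = 2 * ↑Real.pi * I * ↑n / (2 * ↑Real.pi * I) := by field_simp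
          _ = m * k := by rw [hm]; field_simp
      have hnm : (n : ℤ) = m * k := by exact_mod_cast hnc
      have hm0 : 0 ≤ m := by nlinarith [hnm, Int.natCast_nonneg n, Int.natCast_pos.mpr hk]
      refine ⟨m.toNat, ?_⟩
      have : (n : ℤ) = (k : ℤ) * m.toNat := by rw [Int.toNat_of_nonneg hm0]; linarith
      exact_mod_cast this
    have h1 : ∑ h ∈ Finset.range (k + 1), ω ^ h = 1 := by
      rw [geom_sum_eq hω1, pow_succ, hωk, one_mul]
      exact div_self (sub_ne_zero.mpr hω1)
    have h2 : ∑ h ∈ Finset.range (k + 1), ω ^ h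
        = 1 + ∑ h ∈ Finset.Icc 1 k, ω ^ h := by
      rw [Finset.range_eq_Ico, Finset.sum_eq_sum_Ico_succ_bot (by omega)]
      norm_num
      rfl
    rw [h1] at h2
    linear_combination -h2

lemma sum_divisors_ramanujanSum (k n : ℕ) (hk : 0 < k) :
    ∑ d ∈ k.divisors, ramanujanSum d n = if k ∣ n then (k : ℂ) else 0 := by
  rw [← sum_exp_full k n hk]
  unfold ramanujanSum
  rw [Finset.sum_sigma']
  refine Finset.sum_nbij' (fun x => x.2 * (k / x.1))
    (fun h => ⟨k / Nat.gcd h k, h / Nat.gcd h k⟩) ?_ ?_ ?_ ?_ ?_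
  · rintro ⟨d, h⟩ hx
    simp only [Finset.mem_sigma, Nat.mem_divisors, Finset.mem_filter, Finset.mem_Icc] at hx
    obtain ⟨⟨hdk, -⟩, ⟨h1, h2⟩, hcop⟩ := hx
    have hd : 0 < d := by
      rcases Nat.eq_zero_or_pos d with rfl | h; · simp at h1 h2; omega
      exact h
    have hkd : 0 < k / d := Nat.div_pos (Nat.le_of_dvd hk hdk) hd
    simp only [Finset.mem_Icc]
    constructor
    · exact Nat.one_le_iff_ne_zero.mpr (by positivity)
    · calc h * (k / d) ≤ d * (k / d) := Nat.mul_le_mul_right _ h2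
        _ = k := Nat.mul_div_cancel' hdk
  · rintro h hh
    simp only [Finset.mem_Icc] at hh
    have hg : 0 < Nat.gcd h k := Nat.gcd_pos_of_pos_right h (by omega)
    have hgk : Nat.gcd h k ∣ k := Nat.gcd_dvd_right h k
    have hgh : Nat.gcd h k ∣ h := Nat.gcd_dvd_left h k
    simp only [Finset.mem_sigma, Nat.mem_divisors, Finset.mem_filter, Finset.mem_Icc]
    refine ⟨⟨Nat.div_dvd_of_dvd hgk, hk.ne'⟩, ⟨⟨?_, ?_⟩, ?_⟩⟩
    · exact Nat.one_le_iff_ne_zero.mpr (Nat.div_ne_zero_iff_of_dvd hgh |>.mpr ⟨by omega, hg.ne'⟩)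
    · exact Nat.div_le_div_right (by omega) |>.trans_eq rfl
    · exact Nat.coprime_div_gcd_div_gcd hg
  · rintro ⟨d, h⟩ hx
    simp only [Finset.mem_sigma, Nat.mem_divisors, Finset.mem_filter, Finset.mem_Icc] at hx
    obtain ⟨⟨hdk, -⟩, ⟨h1, h2⟩, hcop⟩ := hx
    have hd : 0 < d := by omega
    have hkd : 0 < k / d := Nat.div_pos (Nat.le_of_dvd hk hdk) hd
    obtain ⟨m, hm⟩ := hdk
    have hmd : k / d = m := by rw [hm, Nat.mul_div_cancel_left _ hd]
    have hgcd : Nat.gcd (h * (k / d)) k = k / d := by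
      rw [hmd, hm, show d * m = d * m from rfl, Nat.gcd_mul_right, hcop, one_mul]
    show (⟨k / Nat.gcd (h * (k / d)) k, (h * (k / d)) / Nat.gcd (h * (k / d)) k⟩
        : Σ _ : ℕ, ℕ) = ⟨d, h⟩
    rw [hgcd, Nat.div_div_self ⟨m, hm⟩ hk.ne', Nat.mul_div_cancel _ hkd]
  · rintro h hh
    simp only [Finset.mem_Icc] at hh
    have hg : 0 < Nat.gcd h k := Nat.gcd_pos_of_pos_right h (by omega)
    show (h / Nat.gcd h k) * (k / (k / Nat.gcd h k)) = h
    rw [Nat.div_div_self (Nat.gcd_dvd_right h k) hk.ne']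
    exact Nat.div_mul_cancel (Nat.gcd_dvd_left h k)
  · rintro ⟨d, h⟩ hx
    simp only [Finset.mem_sigma, Nat.mem_divisors, Finset.mem_filter, Finset.mem_Icc] at hx
    obtain ⟨⟨hdk, -⟩, ⟨h1, h2⟩, hcop⟩ := hx
    have hd : 0 < d := by omega
    congr 1
    have hk' : (k : ℂ) ≠ 0 := Nat.cast_ne_zero.mpr hk.ne'
    have hd' : (d : ℂ) ≠ 0 := Nat.cast_ne_zero.mpr hd.ne'
    have hkd : (k : ℂ) = (d : ℂ) * ((k / d : ℕ) : ℂ) := by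
      rw [← Nat.cast_mul, Nat.mul_div_cancel' hdk]
    rw [Nat.cast_mul, hkd]
    have hkd0 : ((k / d : ℕ) : ℂ) ≠ 0 := by
      have : 0 < k / d := Nat.div_pos (Nat.le_of_dvd hk hdk) hd
      exact Nat.cast_ne_zero.mpr this.ne'
    field_simp

lemma ramanujanSum_moebius (k n : ℕ) (hk : 0 < k) :
    ∑ x ∈ k.divisorsAntidiagonal,
        ((ArithmeticFunction.moebius x.1 : ℤ) : ℂ) * (if x.2 ∣ n then (x.2 : ℂ) else 0)
      = ramanujanSum k n := by
  have := (ArithmeticFunction.sum_eq_iff_sum_mul_moebius_eq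
    (f := fun d => ramanujanSum d n)
    (g := fun k => if k ∣ n then (k : ℂ) else 0)).mp
    (fun m hm => sum_divisors_ramanujanSum m n hm)
  exact this k hk

lemma term_eval (p : ℕ) [Fact p.Prime] (q j : ℕ) (hj1 : 1 ≤ j) (hjp : j < p) (s : ℂ) :
    term ↗(legChar p) s (j + p * q)
      = (legendreSym p j : ℂ) * ((p : ℂ) ^ (-s) * ((q : ℂ) + (j : ℂ) / p) ^ (-s)) := by
  have hp0 : (0:ℝ) < p := by exact_mod_cast (Fact.out : p.Prime).pos
  have hne : j + p * q ≠ 0 := by omega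
  rw [term_of_ne_zero hne]
  have hcast : ((j + p * q : ℕ) : ZMod p) = (j : ZMod p) := by
    push_cast [ZMod.natCast_self]
    ring
  show legChar p ((j + p * q : ℕ) : ZMod p) / _ = _
  rw [hcast, legChar_apply, div_eq_mul_inv, ← cpow_neg]
  congr 1
  have hb : (0:ℝ) ≤ (q : ℝ) + j / p := by positivity
  have e2 : ((((q : ℝ) + j / p) : ℝ) : ℂ) = (q : ℂ) + (j : ℂ) / p := by push_cast; ring
  have h : ((p : ℂ) * ((q : ℂ) + (j : ℂ) / p)) ^ (-s)
      = (p : ℂ) ^ (-s) * ((q : ℂ) + (j : ℂ) / p) ^ (-s) := by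
    have h0 := mul_cpow_ofReal_nonneg hp0.le hb (-s)
    rw [e2] at h0
    push_cast at h0 ⊢
    exact h0
  have e1 : ((j + p * q : ℕ) : ℂ) = (p : ℂ) * ((q : ℂ) + (j : ℂ) / p) := by
    have hpc : (p : ℂ) ≠ 0 := by exact_mod_cast hp0.ne'
    push_cast
    field_simp
    ring
  rw [e1, h]

lemma hurwitz_sum_eq (p : ℕ) [Fact p.Prime] {s : ℂ} (hs : 1 < s.re) :
    ∑ j ∈ Finset.Icc 1 (p - 1),
      (legendreSym p j : ℂ) * hurwitzZetaSum s ((j : ℂ) / p)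
      = (p : ℂ) ^ s * LSeries ↗(legChar p) s := by
  have hp : 1 < p := (Fact.out : p.Prime).one_lt
  have hp0 : (0 : ℝ) < p := by positivity
  set χ := legChar p with hχ
  set F : ℕ → ℂ := term ↗χ s with hF
  have hsummable : Summable F := DirichletCharacter.LSeriesSummable_of_one_lt_re χ hs
  set i : (Finset.Icc 1 (p - 1) : Finset ℕ) × ℕ → ℕ := fun x => (x.1 : ℕ) + p * x.2 with hi
  have hinj : Function.Injective i := by
    intro x y h
    obtain ⟨⟨j1, hj1⟩, q1⟩ := x
    obtain ⟨⟨j2, hj2⟩, q2⟩ := y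
    rw [Finset.mem_Icc] at hj1 hj2
    simp only [hi] at h
    have hjlt1 : j1 < p := by omega
    have hjlt2 : j2 < p := by omega
    have hmod : j1 = j2 := by
      have := congrArg (· % p) h
      simpa [Nat.add_mul_mod_self_left, Nat.mod_eq_of_lt hjlt1, Nat.mod_eq_of_lt hjlt2] using this
    subst hmod
    have hq : q1 = q2 := by
      have := congrArg (· / p) h
      simpa [Nat.add_mul_div_left _ _ (by omega : 0 < p), Nat.div_eq_of_lt hjlt1] using this
    subst hq
    rfl
  have hvanish : ∀ k ∉ Set.range i, F k = 0 := by
    intro k hk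
    by_cases hpk : p ∣ k
    · rcases Nat.eq_zero_or_pos k with rfl | hkpos
      · exact term_zero ..
      rw [hF, term_of_ne_zero hkpos.ne']
      have h0 : (k : ZMod p) = 0 := (ZMod.natCast_eq_zero_iff k p).mpr hpk
      show χ ((k : ℕ) : ZMod p) / _ = 0
      rw [h0]
      simp [hχ, legChar]
    · exfalso
      apply hk
      have h1 : k % p ≠ 0 := fun h => hpk (Nat.dvd_of_mod_eq_zero h)
      have h2 : k % p < p := Nat.mod_lt _ (by omega)
      refine ⟨(⟨k % p, Finset.mem_Icc.mpr ⟨by omega, by omega⟩⟩, k / p), ?_⟩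
      simp [hi, Nat.mod_add_div]
  have key : LSeries ↗χ s = ∑' x : (Finset.Icc 1 (p - 1) : Finset ℕ) × ℕ, F (i x) :=
    (hinj.tsum_eq (Function.support_subset_iff'.mpr hvanish)).symm
  have hsum2 : Summable fun x : (Finset.Icc 1 (p - 1) : Finset ℕ) × ℕ => F (i x) :=
    hsummable.comp_injective hinj
  rw [key, Summable.tsum_prod' hsum2 hsum2.prod_factor]
  simp only [hi]
  rw [Finset.tsum_subtype (Finset.Icc 1 (p-1)) (fun j => ∑' q : ℕ, F (j + p * q))]
  rw [Finset.mul_sum]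
  refine Finset.sum_congr rfl fun j hj => ?_
  rw [Finset.mem_Icc] at hj
  have hterm : ∀ q : ℕ, F (j + p * q)
      = ((legendreSym p j : ℂ) * (p : ℂ) ^ (-s)) * ((q : ℂ) + (j : ℂ) / p) ^ (-s) := by
    intro q
    rw [hF, term_eval p q j hj.1 (by omega) s, mul_assoc]
  rw [tsum_congr hterm, tsum_mul_left]
  rw [show hurwitzZetaSum s ((j : ℂ) / p) = ∑' q : ℕ, ((q : ℂ) + (j : ℂ) / p) ^ (-s) from rfl]
  have hpc : (p : ℂ) ≠ 0 := Nat.cast_ne_zero.mpr (by omega)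
  have hps : (p : ℂ) ^ s ≠ 0 := by
    rw [Complex.cpow_def_of_ne_zero hpc]
    exact Complex.exp_ne_zero _
  rw [cpow_neg]
  field_simp
  congr 1
  exact tsum_congr fun q => by ring

open LSeries in
open scoped LSeries.notation in
lemma main_aux (p : ℕ) [Fact p.Prime] (n : ℕ) (hn : 0 < n) (s : ℂ) (hs : 0 < s.re) :
    (∑' k : ℕ+, (legendreSym p (k : ℕ) : ℂ) * ramanujanSum k n / (k : ℂ) ^ ((1 : ℂ) + s))
      = (p : ℂ) ^ ((1 : ℂ) + s) * (∑ d ∈ n.divisors, (legendreSym p d : ℂ) * (d : ℂ) ^ (-s))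
        / (∑ j ∈ Finset.Icc 1 (p - 1),
            (legendreSym p j : ℂ) * hurwitzZetaSum (1 + s) ((j : ℂ) / p)) := by
  have hp1 : 1 < p := (Fact.out : p.Prime).one_lt
  have hre : 1 < ((1 : ℂ) + s).re := by
    simp only [add_re, one_re]
    linarith
  set χ := legChar p with hχ
  set a : ℕ → ℂ := fun d => ↗χ d * (if d ∣ n then (d : ℂ) else 0) with ha
  set b : ℕ → ℂ := ↗χ * ↗ArithmeticFunction.moebius with hb
  have hconv : b ⍟ a = fun k : ℕ => ↗χ k * ramanujanSum k n := by
    funext k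
    rcases Nat.eq_zero_or_pos k with rfl | hk
    · rw [LSeries.convolution_map_zero]
      have h0 : ramanujanSum 0 n = 0 := by simp [ramanujanSum]
      simp [h0]
    · rw [LSeries.convolution_def]
      show _ = ↗χ k * ramanujanSum k n
      rw [← ramanujanSum_moebius k n hk, Finset.mul_sum]
      refine Finset.sum_congr rfl fun x hx => ?_
      have hxk : x.1 * x.2 = k := (Nat.mem_divisorsAntidiagonal.mp hx).1
      have hmul : χ ((k : ℕ) : ZMod p) = χ (x.1 : ZMod p) * χ (x.2 : ZMod p) := by
        rw [← hxk]
        push_cast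
        rw [map_mul]
      rw [hb, ha]
      simp only [Pi.mul_apply]
      rw [hmul]
      ring
  have hvan : ∀ k ∉ n.divisors, term a ((1:ℂ)+s) k = 0 := by
    intro k hk
    rcases eq_or_ne k 0 with rfl | hk0
    · exact term_zero ..
    · rw [term_of_ne_zero hk0]
      have : ¬ k ∣ n := fun hd => hk (Nat.mem_divisors.mpr ⟨hd, hn.ne'⟩)
      rw [ha]
      simp [this]
  have hsa : LSeriesSummable a ((1:ℂ)+s) := summable_of_ne_finset_zero hvan
  have hsb : LSeriesSummable b ((1:ℂ)+s) :=
    DirichletCharacter.LSeriesSummable_mul χ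
      (ArithmeticFunction.LSeriesSummable_moebius_iff.mpr hre)
  have hLa : LSeries a ((1:ℂ)+s)
      = ∑ d ∈ n.divisors, (legendreSym p d : ℂ) * (d : ℂ) ^ (-s) := by
    rw [LSeries, tsum_eq_sum hvan]
    refine Finset.sum_congr rfl fun d hd => ?_
    have hd0 : d ≠ 0 := (Nat.pos_of_mem_divisors hd).ne'
    have hdvd : d ∣ n := (Nat.mem_divisors.mp hd).1
    have hdc : (d : ℂ) ≠ 0 := Nat.cast_ne_zero.mpr hd0
    rw [term_of_ne_zero hd0, ha]
    simp only [if_pos hdvd]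
    rw [legChar_apply, cpow_add _ _ hdc, cpow_one, cpow_neg]
    have hds : (d : ℂ) ^ s ≠ 0 := by
      rw [Complex.cpow_def_of_ne_zero hdc]
      exact Complex.exp_ne_zero _
    field_simp
  have hterm : ∀ k : ℕ+,
      (legendreSym p (k : ℕ) : ℂ) * ramanujanSum k n / (k : ℂ) ^ ((1 : ℂ) + s)
        = term (b ⍟ a) ((1:ℂ)+s) (k : ℕ) := by
    intro k
    rw [term_of_ne_zero k.pos.ne', hconv]
    simp only []
    rw [legChar_apply]
  have hLHS : (∑' k : ℕ+, (legendreSym p (k : ℕ) : ℂ) * ramanujanSum k n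
        / (k : ℂ) ^ ((1 : ℂ) + s)) = LSeries (b ⍟ a) ((1:ℂ)+s) := by
    rw [tsum_congr hterm, LSeries]
    refine Function.Injective.tsum_eq (fun x y h => PNat.coe_injective h)
      (Function.support_subset_iff'.mpr fun k hk => ?_)
    rcases eq_or_ne k 0 with rfl | hk0
    · exact term_zero ..
    · exact absurd ⟨⟨k, Nat.pos_of_ne_zero hk0⟩, rfl⟩ hk
  rw [hLHS, LSeries_convolution' hsb hsa, hLa]
  have hD := hurwitz_sum_eq p (s := (1:ℂ)+s) hre
  rw [hD]
  have hL0 : LSeries ↗χ ((1:ℂ)+s) ≠ 0 :=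
    DirichletCharacter.LSeries_ne_zero_of_one_lt_re χ hre
  have hmu : LSeries ↗χ ((1:ℂ)+s) * LSeries b ((1:ℂ)+s) = 1 :=
    DirichletCharacter.LSeries.mul_mu_eq_one χ hre
  have hpc : (p : ℂ) ≠ 0 := Nat.cast_ne_zero.mpr (by omega)
  have hps : (p : ℂ) ^ ((1:ℂ)+s) ≠ 0 := by
    rw [Complex.cpow_def_of_ne_zero hpc]
    exact Complex.exp_ne_zero _
  rw [← hχ]
  field_simp
  linear_combination (∑ d ∈ n.divisors, (legendreSym p d : ℂ) * (d : ℂ) ^ (-s)) * hmu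

end aux

/-- For a prime `p ≥ 5`, `n ≥ 1` and `Re(s) > 0`,
`∑_k (k/p) c_k(n)/k^{1+s} = p^{1+s} (∑_{d|n} (d/p) d^{-s}) / (∑_{j=1}^{p-1} (j/p) ζ(1+s, j/p))`. -/
theorem legendre_ramanujan_dirichlet_series (p : ℕ) [Fact p.Prime] (hp : 5 ≤ p)
    (n : ℕ) (hn : 0 < n) (s : ℂ) (hs : 0 < s.re) :
    (∑' k : ℕ+, (legendreSym p (k : ℕ) : ℂ) * ramanujanSum k n / (k : ℂ) ^ ((1 : ℂ) + s))
      = (p : ℂ) ^ ((1 : ℂ) + s) * (∑ d ∈ n.divisors, (legendreSym p d : ℂ) * (d : ℂ) ^ (-s))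
        / (∑ j ∈ Finset.Icc 1 (p - 1),
            (legendreSym p j : ℂ) * hurwitzZetaSum (1 + s) ((j : ℂ) / p)) := by
  exact main_aux p n hn s hs
end

section
/- For a prime p ≥ 5 and a positive integer r with gcd(p, r+1) = 1, the quantity T(r,p) = (−1)^{⌊(r−1)/2⌋} · (p^{r+1}/(2(r+1))) · Σ_{j=1}^{p−1} (j/p) B_{r+1}(j/p) is an integer. -/
open Finset PowerSeries

example (t : ℚ) (P : Polynomial ℚ) : Polynomial.aeval t P = P.eval t := by
  simp [Polynomial.aeval_def, Polynomial.eval₂_eq_eval_map]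

lemma bernoulli_factorial_int (n : ℕ) :
    ∃ z : ℤ, ((n + 1).factorial : ℚ) * _root_.bernoulli n = z := by
  induction n using Nat.strong_induction_on with
  | _ n ih =>
    match n, ih with
    | 0, _ => exact ⟨1, by simp⟩
    | 1, _ => exact ⟨-1, by norm_num [Nat.factorial, bernoulli_one]⟩
    | (m+2), ih => ?_
    set n := m + 2 with hn
    have key : ∀ k, k < n → ∃ z : ℤ, ((n.factorial : ℚ) * ((n+1).choose k : ℚ))
        * _root_.bernoulli k = z := by
      intro k hk
      obtain ⟨z, hz⟩ := ih k hk
      have hdvd : (k+1).factorial ∣ n.factorial := Nat.factorial_dvd_factorial (by omega)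
      obtain ⟨q, hq⟩ := hdvd
      refine ⟨(q : ℤ) * ((n+1).choose k : ℤ) * z, ?_⟩
      have hf : (n.factorial : ℚ) = ((k+1).factorial : ℚ) * (q : ℚ) := by
        rw [← Nat.cast_mul, hq]
      rw [hf]
      push_cast
      rw [← hz]
      ring
    choose Z hZ using key
    have hsum := sum_bernoulli (n + 1)
    rw [if_neg (by omega), Finset.sum_range_succ] at hsum
    have hchoose : (((n+1).choose n : ℕ) : ℚ) = (n : ℚ) + 1 := by
      rw [Nat.choose_succ_self_right]; push_cast; ring
    refine ⟨- ∑ k ∈ Finset.attach (range n), Z k (Finset.mem_range.mp k.2), ?_⟩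
    have hfact : ((n+1).factorial : ℚ) = ((n:ℚ)+1) * (n.factorial : ℚ) := by
      rw [Nat.factorial_succ]; push_cast; ring
    have h1 : ((n:ℚ)+1) * _root_.bernoulli n
        = - ∑ k ∈ range n, ((n+1).choose k : ℚ) * _root_.bernoulli k := by
      rw [← hchoose]; linarith [hsum]
    have h2 : ((n+1).factorial : ℚ) * _root_.bernoulli n
        = - ∑ k ∈ range n, ((n.factorial : ℚ) * ((n+1).choose k : ℚ)) * _root_.bernoulli k := by
      rw [hfact, mul_comm ((n:ℚ)+1), mul_assoc, h1, mul_neg, Finset.mul_sum]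
      congr 1
      exact Finset.sum_congr rfl fun k hk => by ring
    rw [h2, ← Finset.sum_attach (range n)
      (fun k => ((n.factorial : ℚ) * ((n+1).choose k : ℚ)) * _root_.bernoulli k)]
    push_cast
    rw [neg_inj]
    exact Finset.sum_congr rfl fun k _ => hZ k (Finset.mem_range.mp k.2)

noncomputable def Bser (t : ℚ) : PowerSeries ℚ :=
  PowerSeries.mk fun n => ((1 : ℚ)/(n.factorial : ℚ)) * (Polynomial.bernoulli n).eval t

lemma Bser_mul (t : ℚ) : Bser t * (exp ℚ - 1) = X * rescale t (exp ℚ) := by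
  have h := Polynomial.bernoulli_generating_function (A := ℚ) t
  convert h using 2
  ext n
  simp [Bser, Polynomial.aeval_def, Polynomial.eval₂_eq_eval_map, smul_eq_mul]

lemma exp_sub_one_ne_zero : exp ℚ - 1 ≠ 0 := by
  intro h
  have := congrArg (PowerSeries.coeff 1) h
  simp [PowerSeries.coeff_exp] at this

lemma rescale_zero_exp : rescale (0 : ℚ) (exp ℚ) = 1 := by
  rw [PowerSeries.rescale_zero]
  simp [PowerSeries.constantCoeff_exp]

lemma rescale_exp_mul (a b : ℚ) :
    rescale a (exp ℚ) * rescale b (exp ℚ) = rescale (a + b) (exp ℚ) :=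
  PowerSeries.exp_mul_exp_eq_exp_add a b

lemma rescale_exp_mul_exp (a : ℚ) :
    rescale a (exp ℚ) * exp ℚ = rescale (a + 1) (exp ℚ) := by
  have h1 : exp ℚ = rescale (1 : ℚ) (exp ℚ) := by rw [PowerSeries.rescale_one]; rfl
  nth_rewrite 2 [h1]
  rw [rescale_exp_mul]

lemma reflect_ps (t : ℚ) : Bser (1 - t) = rescale (-1 : ℚ) (Bser t) := by
  have h := Bser_mul t
  have h2 := congrArg (rescale (-1 : ℚ)) h
  rw [map_mul, map_sub, map_one, map_mul] at h2
  -- h2 : rescale (-1) (Bser t) * (rescale (-1) (exp ℚ) - 1) = rescale (-1) X * rescale (-1) (rescale t (exp ℚ))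
  rw [PowerSeries.rescale_rescale, PowerSeries.rescale_X] at h2
  have hre : ∀ a : ℚ, rescale a (exp ℚ) * exp ℚ = rescale (a + 1) (exp ℚ) := by
    intro a
    have h1 : exp ℚ = rescale (1 : ℚ) (exp ℚ) := by
      rw [PowerSeries.rescale_one]; rfl
    nth_rewrite 2 [h1]
    rw [rescale_exp_mul]
  have h3 : rescale (-1 : ℚ) (Bser t) * (1 - exp ℚ)
      = C (-1) * (X * rescale (1 - t) (exp ℚ)) := by
    have h3' := congrArg (· * exp ℚ) h2
    simp only [mul_assoc, sub_mul, one_mul] at h3'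
    rw [hre, hre, neg_add_cancel, rescale_zero_exp] at h3'
    have harg : t * -1 + 1 = 1 - t := by ring
    rw [harg] at h3'
    exact h3'
  have h5 : rescale (-1 : ℚ) (Bser t) * (exp ℚ - 1) = X * rescale (1 - t) (exp ℚ) := by
    have := congrArg (· * (-1 : PowerSeries ℚ)) h3
    calc rescale (-1 : ℚ) (Bser t) * (exp ℚ - 1)
        = rescale (-1 : ℚ) (Bser t) * (1 - exp ℚ) * (-1) := by ring
      _ = C (-1) * (X * rescale (1 - t) (exp ℚ)) * (-1) := by rw [h3]
      _ = X * rescale (1 - t) (exp ℚ) := by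
          have : C (-1 : ℚ) = -1 := by simp
          rw [this]; ring
  have := Bser_mul (1 - t)
  exact mul_right_cancel₀ exp_sub_one_ne_zero (this.trans h5.symm)

lemma bernoulli_poly_eval_one_sub (n : ℕ) (t : ℚ) :
    (Polynomial.bernoulli n).eval (1 - t) = (-1) ^ n * (Polynomial.bernoulli n).eval t := by
  have h := congrArg (PowerSeries.coeff n) (reflect_ps t)
  rw [PowerSeries.coeff_rescale] at h
  simp only [Bser, PowerSeries.coeff_mk] at h
  have hfac : (n.factorial : ℚ) ≠ 0 := by exact_mod_cast n.factorial_ne_zero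
  field_simp at h
  linarith [h]

noncomputable def cB (k n j : ℕ) : ℚ :=
  (k : ℚ) ^ n * ((Polynomial.bernoulli n).eval ((j : ℚ) / (k : ℚ)) - _root_.bernoulli n)

def Hs (m i : ℕ) : ℕ := ∑ a ∈ Finset.range m, a ^ i

lemma cB_zero (k j : ℕ) : cB k 0 j = 0 := by
  simp [cB, Polynomial.bernoulli_zero, bernoulli_zero]

lemma Hs_zero (m : ℕ) : Hs m 0 = m := by simp [Hs]

lemma hsum_mul (m : ℕ) :
    (∑ a ∈ range m, rescale (a : ℚ) (exp ℚ)) * (exp ℚ - 1)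
      = rescale (m : ℚ) (exp ℚ) - 1 := by
  induction m with
  | zero => simp [rescale_zero_exp]
  | succ m ih =>
    rw [Finset.sum_range_succ, add_mul, ih, mul_sub, mul_one, rescale_exp_mul_exp]
    push_cast
    ring

lemma coeff_hsum (m v : ℕ) :
    PowerSeries.coeff v (∑ a ∈ range m, rescale (a : ℚ) (exp ℚ))
      = (Hs m v : ℚ) * ((1 : ℚ)/(v.factorial : ℚ)) := by
  rw [map_sum]
  simp only [PowerSeries.coeff_rescale, PowerSeries.coeff_exp]
  rw [Hs]
  push_cast
  rw [Finset.sum_mul]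

lemma step_a (k j : ℕ) (hk : 0 < k) :
    (PowerSeries.mk fun n => ((1 : ℚ)/(n.factorial : ℚ)) * cB k n j)
        * (∑ a ∈ range k, rescale (a : ℚ) (exp ℚ))
      = C (k : ℚ) * X * (∑ a ∈ range j, rescale (a : ℚ) (exp ℚ)) := by
  have hk0 : (k : ℚ) ≠ 0 := by exact_mod_cast hk.ne'
  apply mul_right_cancel₀ exp_sub_one_ne_zero
  rw [mul_assoc, hsum_mul, mul_assoc, hsum_mul]
  have hA : (PowerSeries.mk fun n => ((1 : ℚ)/(n.factorial : ℚ)) * cB k n j)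
      = rescale (k : ℚ) (Bser ((j : ℚ)/(k : ℚ))) - rescale (k : ℚ) (Bser 0) := by
    ext n
    simp only [PowerSeries.coeff_mk, map_sub, PowerSeries.coeff_rescale, Bser,
      Polynomial.bernoulli_eval_zero]
    rw [cB]
    ring
  have hB : ∀ t : ℚ, rescale (k : ℚ) (Bser t) * (rescale (k : ℚ) (exp ℚ) - 1)
      = C (k : ℚ) * X * rescale (t * k) (exp ℚ) := by
    intro t
    have := congrArg (rescale (k : ℚ)) (Bser_mul t)
    rw [map_mul, map_sub, map_one, map_mul, PowerSeries.rescale_rescale,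
      PowerSeries.rescale_X] at this
    rw [this]
  rw [hA, sub_mul, hB, hB, div_mul_cancel₀ _ hk0, zero_mul, rescale_zero_exp, mul_one]
  ring

lemma key_identity (k j : ℕ) (hk : 0 < k) (n : ℕ) :
    ∑ u ∈ range (n + 1), (n.choose u : ℚ) * cB k u j * (Hs k (n - u) : ℚ)
      = (k : ℚ) * n * (Hs j (n - 1) : ℚ) := by
  cases n with
  | zero => simp [cB_zero]
  | succ n' =>
    have h := congrArg (PowerSeries.coeff (n' + 1)) (step_a k j hk)
    rw [PowerSeries.coeff_mul, Finset.Nat.sum_antidiagonal_eq_sum_range_succ_mk,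
      mul_assoc, PowerSeries.coeff_C_mul, PowerSeries.coeff_succ_X_mul, coeff_hsum] at h
    simp only [PowerSeries.coeff_mk, coeff_hsum] at h
    have hkey : ∀ u ∈ range (n' + 1 + 1),
        ((n' + 1).choose u : ℚ) * cB k u j * (Hs k (n' + 1 - u) : ℚ)
          = ((n' + 1).factorial : ℚ) *
            (((1 : ℚ)/(u.factorial : ℚ) * cB k u j) *
              ((Hs k (n' + 1 - u) : ℚ) * ((1 : ℚ)/(((n' + 1 - u).factorial : ℚ))))) := by
      intro u hu
      have hu' : u ≤ n' + 1 := by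
        have := Finset.mem_range.mp hu; omega
      rw [Nat.cast_choose ℚ hu']
      have h1 : (u.factorial : ℚ) ≠ 0 := by exact_mod_cast u.factorial_ne_zero
      have h2 : ((n' + 1 - u).factorial : ℚ) ≠ 0 := by
        exact_mod_cast (n' + 1 - u).factorial_ne_zero
      field_simp
    rw [Finset.sum_congr rfl hkey, ← Finset.mul_sum, h]
    have h3 : ((n' : ℚ) + 1) ≠ 0 := by positivity
    have h4 : ((n'.factorial : ℚ)) ≠ 0 := by exact_mod_cast n'.factorial_ne_zero
    rw [Nat.factorial_succ]
    push_cast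
    field_simp

lemma claimA (k j : ℕ) (hk : 0 < k) (n : ℕ) :
    ∃ z : ℤ, (k : ℚ) ^ n * cB k n j = (n : ℚ) * z := by
  induction n using Nat.strong_induction_on with
  | _ n ih =>
    match n, ih with
    | 0, _ => exact ⟨0, by simp [cB_zero]⟩
    | (n' + 1), ih => ?_
    have hki := key_identity k j hk (n' + 1)
    rw [Finset.sum_range_succ] at hki
    have hlast : (((n' + 1).choose (n' + 1) : ℕ) : ℚ) * cB k (n' + 1) j
        * (Hs k (n' + 1 - (n' + 1)) : ℚ) = (k : ℚ) * cB k (n' + 1) j := by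
      simp [Nat.choose_self, Hs_zero]
      ring
    rw [hlast] at hki
    have hmem : (k : ℚ) ^ (n' + 1) * cB k (n' + 1) j
        ∈ AddSubgroup.zmultiples ((n' + 1 : ℕ) : ℚ) := by
      have hexpr : (k : ℚ) ^ (n' + 1) * cB k (n' + 1) j
          = ((n' + 1 : ℕ) : ℚ) * ((k : ℚ) ^ (n' + 1) * (Hs j (n' + 1 - 1) : ℚ))
            - ∑ u ∈ range (n' + 1), (k : ℚ) ^ n'
                * (((n' + 1).choose u : ℚ) * cB k u j * (Hs k (n' + 1 - u) : ℚ)) := by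
        rw [← Finset.mul_sum]
        have : (k : ℚ) ^ n' * (∑ u ∈ range (n' + 1),
            ((n' + 1).choose u : ℚ) * cB k u j * (Hs k (n' + 1 - u) : ℚ))
            = (k : ℚ) ^ n' * ((k : ℚ) * ((n' + 1 : ℕ) : ℚ) * (Hs j (n' + 1 - 1) : ℚ)
              - (k : ℚ) * cB k (n' + 1) j) := by
          congr 1
          linarith [hki]
        rw [this]
        push_cast
        ring
      rw [hexpr]
      apply AddSubgroup.sub_mem
      · exact AddSubgroup.mem_zmultiples_iff.mpr
          ⟨((k : ℤ) ^ (n' + 1) * (Hs j (n' + 1 - 1) : ℤ)), by push_cast; rw [zsmul_eq_mul]; push_cast; ring⟩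
      · apply AddSubgroup.sum_mem
        intro u hu
        have hun : u < n' + 1 := Finset.mem_range.mp hu
        obtain ⟨z, hz⟩ := ih u hun
        match u, hz with
        | 0, hz =>
          simp only [cB_zero, mul_zero, zero_mul]
          exact AddSubgroup.zero_mem _
        | (v + 1), hz => ?_
        have hvn : v + 1 ≤ n' := by omega
        apply AddSubgroup.mem_zmultiples_iff.mpr
        refine ⟨(n'.choose v : ℤ) * (Hs k (n' + 1 - (v + 1)) : ℤ) * (k : ℤ) ^ (n' - (v + 1)) * z, ?_⟩
        have hcc : (n' + 1 : ℕ) * n'.choose v = (n' + 1).choose (v + 1) * (v + 1) :=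
          Nat.add_one_mul_choose_eq n' v
        have hccQ : ((n' : ℚ) + 1) * (n'.choose v : ℚ)
            = ((n' + 1).choose (v + 1) : ℚ) * ((v : ℚ) + 1) := by exact_mod_cast hcc
        have hpow : (k : ℚ) ^ n' = (k : ℚ) ^ (n' - (v + 1)) * (k : ℚ) ^ (v + 1) := by
          rw [← pow_add]
          congr 1
          omega
        rw [zsmul_eq_mul, hpow]
        push_cast
        push_cast at hz
        try simp only [Nat.succ_sub_succ]
        try simp only [show n' + 1 - (v + 1) = n' - v from by omega]
        linear_combination ((Hs k (n' - v) : ℚ) * (k : ℚ) ^ (n' - (v + 1)) * (z : ℚ)) * hccQ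
          - (((n' + 1).choose (v + 1) : ℚ) * (Hs k (n' - v) : ℚ)
              * (k : ℚ) ^ (n' - (v + 1))) * hz
    obtain ⟨z, hz⟩ := AddSubgroup.mem_zmultiples_iff.mp hmem
    exact ⟨z, by rw [← hz, zsmul_eq_mul]; push_cast; ring⟩

lemma cB_expansion (k n j : ℕ) (hk : 0 < k) :
    cB k n j = ∑ i ∈ range n,
      (n.choose i : ℚ) * _root_.bernoulli i * (k : ℚ) ^ i * (j : ℚ) ^ (n - i) := by
  have hk0 : (k : ℚ) ≠ 0 := by exact_mod_cast hk.ne'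
  rw [cB, Polynomial.bernoulli, Polynomial.eval_finset_sum]
  simp only [Polynomial.eval_monomial]
  rw [Finset.sum_range_succ]
  have hl : _root_.bernoulli n * ((n.choose n : ℕ) : ℚ) * ((j : ℚ)/(k : ℚ)) ^ (n - n)
      = _root_.bernoulli n := by simp
  rw [hl, add_sub_cancel_right, Finset.mul_sum]
  refine Finset.sum_congr rfl fun i hi => ?_
  have hin : i ≤ n := le_of_lt (Finset.mem_range.mp hi)
  have hsplit : (k : ℚ) ^ n = (k : ℚ) ^ i * (k : ℚ) ^ (n - i) := by
    rw [← pow_add]; congr 1; omega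
  rw [div_pow, hsplit]
  have hkpow : (k : ℚ) ^ (n - i) ≠ 0 := pow_ne_zero _ hk0
  field_simp

lemma claimB (p n j : ℕ) (hp : p.Prime) :
    ∃ (z : ℤ) (d : ℕ), 0 < d ∧ ¬ (p ∣ d) ∧ (d : ℚ) * cB p n j = z := by
  haveI : Fact p.Prime := ⟨hp⟩
  set d : ℕ := ordCompl[p] n.factorial with hd_def
  have hd : 0 < d := Nat.ordCompl_pos p n.factorial_ne_zero
  have hnd : ¬ p ∣ d := Nat.not_dvd_ordCompl hp n.factorial_ne_zero
  have hmem : (d : ℚ) * cB p n j ∈ AddSubgroup.zmultiples (1 : ℚ) := by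
    rw [cB_expansion p n j hp.pos, Finset.mul_sum]
    apply AddSubgroup.sum_mem
    intro i hi
    have hin : i < n := Finset.mem_range.mp hi
    obtain ⟨z, hzB⟩ := bernoulli_factorial_int i
    -- (i+1)! divides d * p^i
    have hvp : ((i+1).factorial).factorization p ≤ i := by
      rw [Nat.factorization_def _ hp]
      have hv := sub_one_mul_padicValNat_factorial (p := p) (i + 1)
      have hs : (p.digits (i+1)).sum ≠ 0 := by
        intro h0
        have hnil : p.digits (i+1) ≠ [] := Nat.digits_ne_nil_iff_ne_zero.mpr (by omega)
        have hlast := Nat.getLast_digit_ne_zero p (show i + 1 ≠ 0 by omega)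
        exact hlast (by
          have hall := List.sum_eq_zero_iff.mp h0
          exact hall _ (List.getLast_mem hnil))
      have hle : padicValNat p ((i+1).factorial)
          ≤ (p - 1) * padicValNat p ((i+1).factorial) :=
        Nat.le_mul_of_pos_left _ (by have := hp.two_le; omega)
      omega
    have hdvd : (i+1).factorial ∣ d * p ^ i := by
      have h1 : ordProj[p] ((i+1).factorial) ∣ p ^ i := pow_dvd_pow p hvp
      have h2 : ordCompl[p] ((i+1).factorial) ∣ d := by
        rw [hd_def]
        exact Nat.ordCompl_dvd_ordCompl_of_dvd
          (Nat.factorial_dvd_factorial (show i + 1 ≤ n by omega)) p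
      calc (i+1).factorial = ordProj[p] ((i+1).factorial) * ordCompl[p] ((i+1).factorial) :=
            (Nat.ordProj_mul_ordCompl_eq_self _ p).symm
        _ ∣ p ^ i * d := mul_dvd_mul h1 h2
        _ = d * p ^ i := mul_comm _ _
    obtain ⟨q, hq⟩ := hdvd
    apply AddSubgroup.mem_zmultiples_iff.mpr
    refine ⟨(n.choose i : ℤ) * (j : ℤ) ^ (n - i) * (q : ℤ) * z, ?_⟩
    rw [zsmul_eq_mul, mul_one]
    have hqQ : (d : ℚ) * (p : ℚ) ^ i = ((i+1).factorial : ℚ) * (q : ℚ) := by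
      exact_mod_cast congrArg (fun x : ℕ => (x : ℚ)) hq
    push_cast
    calc ((n.choose i : ℚ)) * (j : ℚ) ^ (n - i) * (q : ℚ) * (z : ℚ)
        = ((n.choose i : ℚ)) * (j : ℚ) ^ (n - i) * (q : ℚ)
          * (((i+1).factorial : ℚ) * _root_.bernoulli i) := by rw [hzB]
      _ = ((n.choose i : ℚ)) * (j : ℚ) ^ (n - i) * _root_.bernoulli i
          * (((i+1).factorial : ℚ) * (q : ℚ)) := by ring
      _ = ((n.choose i : ℚ)) * (j : ℚ) ^ (n - i) * _root_.bernoulli i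
          * ((d : ℚ) * (p : ℚ) ^ i) := by rw [hqQ]
      _ = (d : ℚ) * ((n.choose i : ℚ) * _root_.bernoulli i * (p : ℚ) ^ i * (j : ℚ) ^ (n - i)) := by
          ring
  obtain ⟨z, hz⟩ := AddSubgroup.mem_zmultiples_iff.mp hmem
  exact ⟨z, d, hd, hnd, by rw [← hz, zsmul_eq_mul, mul_one]⟩

lemma cB_int_dvd (p n j : ℕ) (hp : p.Prime) (hn : ¬ p ∣ n) :
    ∃ w : ℤ, cB p n j = (n : ℚ) * w := by
  obtain ⟨z1, hz1⟩ := claimA p j hp.pos n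
  obtain ⟨z2, d, hd, hnd, hz2⟩ := claimB p n j hp
  have hdQ : (d : ℚ) ≠ 0 := by exact_mod_cast hd.ne'
  have key : (d : ℤ) * ((n : ℤ) * z1) = z2 * (p : ℤ) ^ n := by
    have hQ : (d : ℚ) * ((n : ℚ) * z1) = (z2 : ℚ) * (p : ℚ) ^ n := by
      rw [← hz1]
      calc (d : ℚ) * ((p : ℚ) ^ n * cB p n j)
          = (p : ℚ) ^ n * ((d : ℚ) * cB p n j) := by ring
        _ = (p : ℚ) ^ n * z2 := by rw [hz2]
        _ = (z2 : ℚ) * (p : ℚ) ^ n := by ring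
    exact_mod_cast hQ
  have hco_dp : Nat.Coprime d (p ^ n) :=
    Nat.Coprime.pow_right _ ((hp.coprime_iff_not_dvd.mpr hnd).symm)
  have hco_dpZ : IsCoprime (d : ℤ) ((p : ℤ) ^ n) := by
    rw [show ((p : ℤ) ^ n) = ((p ^ n : ℕ) : ℤ) by push_cast; ring]
    exact Nat.isCoprime_iff_coprime.mpr hco_dp
  have hdz : (d : ℤ) ∣ z2 := by
    apply hco_dpZ.dvd_of_dvd_mul_right
    exact ⟨(n : ℤ) * z1, by linarith [key]⟩
  obtain ⟨c, hc⟩ := hdz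
  have hcB : cB p n j = (c : ℚ) := by
    apply mul_left_cancel₀ hdQ
    rw [hz2, hc]
    push_cast
    ring
  have key2 : (p : ℤ) ^ n * c = (n : ℤ) * z1 := by
    have hQ2 : (p : ℚ) ^ n * (c : ℚ) = (n : ℚ) * z1 := by rw [← hcB, hz1]
    exact_mod_cast hQ2
  have hco_np : Nat.Coprime n (p ^ n) :=
    Nat.Coprime.pow_right _ ((hp.coprime_iff_not_dvd.mpr hn).symm)
  have hco_npZ : IsCoprime ((n : ℤ)) ((p : ℤ) ^ n) := by
    rw [show ((p : ℤ) ^ n) = ((p ^ n : ℕ) : ℤ) by push_cast; ring]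
    exact Nat.isCoprime_iff_coprime.mpr hco_np
  have hnc : (n : ℤ) ∣ c := by
    apply hco_npZ.dvd_of_dvd_mul_right
    exact ⟨z1, by linarith [key2]⟩
  obtain ⟨w, hw⟩ := hnc
  exact ⟨w, by rw [hcB, hw]; push_cast; ring⟩

lemma legendre_sum_zero (p : ℕ) [Fact p.Prime] (hp2 : p ≠ 2) :
    ∑ j ∈ Finset.Icc 1 (p - 1), legendreSym p (j : ℤ) = 0 := by
  have pp := (Fact.out : p.Prime)
  haveI : NeZero p := ⟨pp.ne_zero⟩
  have hrange : Finset.range p = insert 0 (Finset.Icc 1 (p - 1)) := by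
    ext x
    simp only [Finset.mem_range, Finset.mem_insert, Finset.mem_Icc]
    have := pp.pos
    omega
  have h0 : (0 : ℕ) ∉ Finset.Icc 1 (p - 1) := by simp
  have htot : ∑ j ∈ Finset.range p, legendreSym p (j : ℤ)
      = ∑ a : ZMod p, quadraticChar (ZMod p) a := by
    refine Finset.sum_bij' (fun j _ => ((j : ℕ) : ZMod p)) (fun a _ => a.val)
      (fun a _ => Finset.mem_univ _) (fun a _ => Finset.mem_range.mpr (ZMod.val_lt a))
      (fun a ha => ZMod.val_cast_of_lt (Finset.mem_range.mp ha))
      (fun a _ => ZMod.natCast_rightInverse a) (fun a _ => ?_)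
    show legendreSym p ((a : ℕ) : ℤ) = _
    rw [legendreSym]
    norm_cast
  have hq := quadraticChar_sum_zero (F := ZMod p)
    (by rw [ZMod.ringChar_zmod_n]; exact hp2)
  rw [hrange, Finset.sum_insert h0] at htot
  have h00 : legendreSym p ((0 : ℕ) : ℤ) = 0 := by
    norm_num [legendreSym.at_zero]
  rw [h00, zero_add] at htot
  exact htot.trans hq

lemma legendreSym_congr (p : ℕ) [Fact p.Prime] (a b : ℤ) (h : (a : ZMod p) = (b : ZMod p)) :
    legendreSym p a = legendreSym p b := by
  simp only [legendreSym]
  rw [h]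

/-- For a prime `p ≥ 5` and positive `r` with `gcd(p, r+1) = 1`, the quantity
`T(r,p) = (-1)^⌊(r-1)/2⌋ (p^{r+1}/(2(r+1))) ∑_{j=1}^{p-1} (j/p) B_{r+1}(j/p)`
is an integer. -/
theorem T_is_integer (p : ℕ) [Fact p.Prime] (hp : 5 ≤ p) (r : ℕ) (hr : 0 < r)
    (hco : Nat.Coprime p (r + 1)) :
    ∃ m : ℤ,
      (-1 : ℚ) ^ ((r - 1) / 2) * ((p : ℚ) ^ (r + 1) / (2 * (r + 1)))
          * ∑ j ∈ Finset.Icc 1 (p - 1),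
              (legendreSym p j : ℚ) * (Polynomial.bernoulli (r + 1)).eval ((j : ℚ) / p)
        = (m : ℚ) := by
  have pp := (Fact.out : p.Prime)
  set n := r + 1 with hn
  have hn2 : 2 ≤ n := by omega
  have hp2 : p ≠ 2 := by omega
  have hpodd : p % 2 = 1 := Nat.odd_iff.mp (pp.odd_of_ne_two hp2)
  have hp0 : 0 < p := pp.pos
  have hpQ : (p : ℚ) ≠ 0 := by positivity
  have hnQ : (n : ℚ) ≠ 0 := by positivity
  have hnp : ¬ p ∣ n := by
    intro h
    have hd : p ∣ Nat.gcd p n := Nat.dvd_gcd dvd_rfl h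
    rw [Nat.Coprime] at hco
    rw [hco] at hd
    have := Nat.le_of_dvd one_pos hd
    omega
  -- integrality with divisibility by n
  have hwex : ∀ j : ℕ, ∃ w : ℤ, cB p n j = (n : ℚ) * w := fun j => cB_int_dvd p n j pp hnp
  choose w hw using hwex
  -- reflection relation for w
  have hwrefl : ∀ j ∈ Finset.Icc 1 (p - 1), w (p - j) = (-1) ^ n * w j := by
    intro j hj
    obtain ⟨hj1, hj2⟩ := Finset.mem_Icc.mp hj
    have hjp : j ≤ p := by omega
    have hcast : (((p - j : ℕ)) : ℚ) = (p : ℚ) - (j : ℚ) := by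
      push_cast [hjp]
      ring
    have hBrefl : cB p n (p - j) = (-1) ^ n * cB p n j := by
      rw [cB, cB, hcast]
      have harg : ((p : ℚ) - (j : ℚ)) / (p : ℚ) = 1 - (j : ℚ) / (p : ℚ) := by
        field_simp
      rw [harg, bernoulli_poly_eval_one_sub]
      have hBn : _root_.bernoulli n = (-1) ^ n * _root_.bernoulli n := by
        rcases Nat.even_or_odd n with he | ho
        · rw [he.neg_one_pow]; ring
        · have hzero : _root_.bernoulli n = 0 := by
            rw [bernoulli, bernoulli'_eq_zero_of_odd ho (by omega)]
            ring
          rw [hzero]; ring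
      linear_combination (-(p : ℚ) ^ n) * hBn
    have hthis := hw (p - j)
    rw [hBrefl, hw j] at hthis
    have h2 : (n : ℚ) * ((w (p - j) : ℤ) : ℚ) = (n : ℚ) * (((-1) ^ n * w j : ℤ) : ℚ) := by
      push_cast
      push_cast at hthis
      linarith [hthis]
    exact_mod_cast mul_left_cancel₀ hnQ h2
  -- the sum identity
  set W : ℤ := ∑ j ∈ Finset.Icc 1 (p - 1), legendreSym p (j : ℤ) * w j with hW
  have hsum : (p : ℚ) ^ n *
      (∑ j ∈ Finset.Icc 1 (p - 1),
        (legendreSym p j : ℚ) * (Polynomial.bernoulli n).eval ((j : ℚ) / p))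
      = (n : ℚ) * (W : ℚ) := by
    rw [Finset.mul_sum]
    have hterm : ∀ j ∈ Finset.Icc 1 (p - 1),
        (p : ℚ) ^ n * ((legendreSym p j : ℚ) * (Polynomial.bernoulli n).eval ((j : ℚ) / p))
          = (legendreSym p j : ℚ) * cB p n j
            + (legendreSym p j : ℚ) * ((p : ℚ) ^ n * _root_.bernoulli n) := by
      intro j _
      rw [cB]
      ring
    rw [Finset.sum_congr rfl hterm, Finset.sum_add_distrib]
    have hzero : ∑ j ∈ Finset.Icc 1 (p - 1), (legendreSym p j : ℚ) = 0 := by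
      have hz := legendre_sum_zero p hp2
      exact_mod_cast congrArg (fun x : ℤ => (x : ℚ)) hz
    have hsecond : ∑ j ∈ Finset.Icc 1 (p - 1),
        (legendreSym p j : ℚ) * ((p : ℚ) ^ n * _root_.bernoulli n) = 0 := by
      rw [← Finset.sum_mul, hzero, zero_mul]
    rw [hsecond, add_zero]
    have hfirst : ∀ j ∈ Finset.Icc 1 (p - 1),
        (legendreSym p j : ℚ) * cB p n j
          = (n : ℚ) * ((legendreSym p (j : ℤ) * w j : ℤ) : ℚ) := by
      intro j _
      rw [hw j]
      push_cast
      ring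
    rw [Finset.sum_congr rfl hfirst, ← Finset.mul_sum, hW]
    push_cast
    ring
  -- evenness of W
  have hWeven : (2 : ℤ) ∣ W := by
    have hcast : ((W : ℤ) : ZMod 2) = 0 := by
      rw [hW]
      push_cast
      refine Finset.sum_involution (fun j _ => p - j) ?_ ?_ ?_ ?_
      · -- f a + f (p - a) = 0
        intro a ha
        obtain ⟨ha1, ha2⟩ := Finset.mem_Icc.mp ha
        have hap : a ≤ p := by omega
        -- legendreSym p (p - a) = legendreSym p (-1) * legendreSym p a
        have hls : legendreSym p ((p - a : ℕ) : ℤ) = legendreSym p (-1) * legendreSym p (a : ℤ) := by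
          rw [← legendreSym.mul]
          apply legendreSym_congr
          push_cast [hap]
          rw [ZMod.natCast_self]
          ring
        have hminus1 : ((-1 : ℤ) : ZMod p) ≠ 0 := by
          intro h0
          rw [Int.cast_neg, Int.cast_one, neg_eq_zero] at h0
          exact one_ne_zero h0
        have hσ := legendreSym.eq_one_or_neg_one p hminus1
        have hwr := hwrefl a ha
        have hval : ((legendreSym p ((p - a : ℕ) : ℤ) * w (p - a) : ℤ) : ZMod 2)
            = ((legendreSym p (a : ℤ) * w a : ℤ) : ZMod 2) := by
          rw [hls, hwr]
          push_cast
          have hm1 : (-1 : ZMod 2) = 1 := by decide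
          rcases hσ with h1 | h1 <;> rw [h1] <;> push_cast <;>
            simp [hm1, CharTwo.neg_eq]
        push_cast at hval ⊢
        show _ + ((legendreSym p ((p - a : ℕ) : ℤ) : ZMod 2) * ((w (p - a) : ℤ) : ZMod 2)) = 0
        rw [hval]
        exact CharTwo.add_self_eq_zero _
      · -- g a ≠ a
        intro a ha _
        obtain ⟨ha1, ha2⟩ := Finset.mem_Icc.mp ha
        show p - a ≠ a
        omega
      · -- g maps into the set
        intro a ha
        obtain ⟨ha1, ha2⟩ := Finset.mem_Icc.mp ha
        show p - a ∈ Finset.Icc 1 (p - 1)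
        refine Finset.mem_Icc.mpr ⟨by omega, by omega⟩
      · -- involution
        intro a ha
        obtain ⟨ha1, ha2⟩ := Finset.mem_Icc.mp ha
        show p - (p - a) = a
        omega
    exact (ZMod.intCast_zmod_eq_zero_iff_dvd W 2).mp hcast
  obtain ⟨V, hV⟩ := hWeven
  refine ⟨(-1) ^ ((r - 1) / 2) * V, ?_⟩
  have hWV : (W : ℚ) = 2 * (V : ℚ) := by exact_mod_cast congrArg (fun x : ℤ => (x : ℚ)) hV
  have hnr : (n : ℚ) = (r : ℚ) + 1 := by push_cast [hn]; ring
  calc (-1 : ℚ) ^ ((r - 1) / 2) * ((p : ℚ) ^ n / (2 * ((r : ℚ) + 1)))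
        * ∑ j ∈ Finset.Icc 1 (p - 1),
            (legendreSym p j : ℚ) * (Polynomial.bernoulli n).eval ((j : ℚ) / p)
      = (-1 : ℚ) ^ ((r - 1) / 2) * ((p : ℚ) ^ n
          * ∑ j ∈ Finset.Icc 1 (p - 1),
              (legendreSym p j : ℚ) * (Polynomial.bernoulli n).eval ((j : ℚ) / p))
          / (2 * ((r : ℚ) + 1)) := by ring
    _ = (-1 : ℚ) ^ ((r - 1) / 2) * ((n : ℚ) * (W : ℚ)) / (2 * ((r : ℚ) + 1)) := by rw [hsum]
    _ = (-1 : ℚ) ^ ((r - 1) / 2) * (((r : ℚ) + 1) * (2 * (V : ℚ))) / (2 * ((r : ℚ) + 1)) := by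
        rw [hWV, hnr]
    _ = (-1 : ℚ) ^ ((r - 1) / 2) * (V : ℚ) := by
        have hr1 : ((r : ℚ) + 1) ≠ 0 := by positivity
        field_simp
    _ = (((-1) ^ ((r - 1) / 2) * V : ℤ) : ℚ) := by push_cast; ring
end

section
/- For primes p > 10: Σ_{j=2}^{(p−1)/2} 1/sin²(πj/p) < p²/π². -/
open Real Finset

lemma sin_lb (x : ℝ) (hx : 0 ≤ x) : x - x ^ 3 / 6 ≤ Real.sin x := by
  have hmono : MonotoneOn (fun x => Real.sin x - x + x ^ 3 / 6) (Set.Ici 0) := by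
    apply monotoneOn_of_deriv_nonneg (convex_Ici 0)
    · exact (((Real.continuous_sin.sub continuous_id).add
        ((continuous_pow 3).div_const 6)).continuousOn)
    · intro y hy
      exact (((Real.differentiable_sin.sub differentiable_id).add
        ((differentiable_pow 3).div_const 6)).differentiableAt).differentiableWithinAt
    · intro y hy
      have h : HasDerivAt (fun x => Real.sin x - x + x ^ 3 / 6)
          (Real.cos y - 1 + (3 : ℕ) * y ^ 2 / 6) y := by
        have := ((Real.hasDerivAt_sin y).sub (hasDerivAt_id y)).add
          ((hasDerivAt_pow 3 y).div_const 6)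
        exact this.congr_deriv (by norm_num)
      rw [HasDerivAt.deriv h]
      have := Real.one_sub_sq_div_two_le_cos (x := y)
      push_cast
      nlinarith
  have h0 : (fun x => Real.sin x - x + x ^ 3 / 6) 0 ≤ (fun x => Real.sin x - x + x ^ 3 / 6) x :=
    hmono (Set.self_mem_Ici) (Set.mem_Ici.2 hx) hx
  simp at h0
  linarith [h0]

lemma inv_sin_sq_le (x : ℝ) (hx : 0 < x) (hx3 : x ^ 2 ≤ 3) :
    1 / Real.sin x ^ 2 ≤ 1 / x ^ 2 + 2 / 3 + x ^ 2 / 9 := by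
  have hlb := sin_lb x hx.le
  have hs : 3 * x / (3 + x ^ 2) ≤ Real.sin x := by
    rw [div_le_iff₀ (by positivity)]
    nlinarith [mul_nonneg (pow_nonneg hx.le 3) (sub_nonneg.2 hx3)]
  have hs0 : 0 < Real.sin x := lt_of_lt_of_le (by positivity) hs
  have hsq : (3 * x / (3 + x ^ 2)) ^ 2 ≤ Real.sin x ^ 2 := by
    apply sq_le_sq' _ hs
    nlinarith [div_pos (by positivity : (0:ℝ) < 3 * x) (by positivity : (0:ℝ) < 3 + x ^ 2)]
  have h1 : 1 / Real.sin x ^ 2 ≤ 1 / (3 * x / (3 + x ^ 2)) ^ 2 :=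
    one_div_le_one_div_of_le (by positivity) hsq
  have h2 : 1 / (3 * x / (3 + x ^ 2)) ^ 2 = 1 / x ^ 2 + 2 / 3 + x ^ 2 / 9 := by
    field_simp
    ring
  linarith [h1, h2.le, h2.ge]

lemma sumA (n : ℕ) (hn : 1 ≤ n) :
    ∑ j ∈ Icc 2 n, (1 : ℝ) / (j : ℝ) ^ 2 ≤ 2 / 3 - 2 / (2 * (n : ℝ) + 1) := by
  induction n, hn using Nat.le_induction with
  | base => norm_num
  | succ m hm ih =>
    rw [Finset.sum_Icc_succ_top (by omega)]
    have hm1 : (1 : ℝ) ≤ (m : ℝ) := by exact_mod_cast hm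
    have hstep : (1 : ℝ) / ((m : ℝ) + 1) ^ 2 ≤ 2 / (2 * m + 1) - 2 / (2 * (m + 1) + 1) := by
      rw [div_sub_div _ _ (by positivity) (by positivity), div_le_div_iff₀ (by positivity) (by positivity)]
      ring_nf
      nlinarith
    push_cast
    push_cast at ih
    linarith

lemma sumB (n : ℕ) :
    ∑ j ∈ Icc 2 n, ((j : ℝ)) ^ 2 ≤ (n : ℝ) * ((n : ℝ) + 1) * (2 * (n : ℝ) + 1) / 6 := by
  induction n with
  | zero => simp
  | succ m ih =>
    rcases le_or_gt 2 (m + 1) with h | h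
    · rw [Finset.sum_Icc_succ_top h]
      push_cast
      push_cast at ih
      nlinarith [ih]
    · have hm0 : m = 0 := by omega
      subst hm0
      rw [show Finset.Icc 2 1 = ∅ from rfl]
      norm_num

set_option maxHeartbeats 1000000 in
/-- For primes `p > 10`: `∑_{j=2}^{(p-1)/2} 1/sin²(πj/p) < p²/π²`. -/
theorem sum_inv_sin_sq_lt (p : ℕ) (hp : p.Prime) (h10 : 10 < p) :
    ∑ j ∈ Finset.Icc 2 ((p - 1) / 2), 1 / Real.sin (Real.pi * j / p) ^ 2
      < (p : ℝ) ^ 2 / Real.pi ^ 2 := by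
  obtain ⟨n, hn⟩ := (hp.odd_of_ne_two (by omega))
  have hn5 : 5 ≤ n := by omega
  have hhalf : (p - 1) / 2 = n := by omega
  rw [hhalf]
  set N : ℝ := (n : ℝ) with hN
  set P : ℝ := (p : ℝ) with hPdef
  have hPN : P = 2 * N + 1 := by rw [hPdef, hN, hn]; push_cast; ring
  have hN5 : (5 : ℝ) ≤ N := by rw [hN]; exact_mod_cast hn5
  have hP0 : (0 : ℝ) < P := by nlinarith
  have hπ := Real.pi_pos
  have hπu := Real.pi_lt_d2
  have hπl := Real.pi_gt_d6
  -- per-term bound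
  have hterm : ∀ j ∈ Icc 2 n, 1 / Real.sin (Real.pi * j / P) ^ 2 ≤
      P ^ 2 / Real.pi ^ 2 * (1 / (j : ℝ) ^ 2) + 2 / 3 + Real.pi ^ 2 / (9 * P ^ 2) * (j : ℝ) ^ 2 := by
    intro j hj
    rw [Finset.mem_Icc] at hj
    have hj2 : (2 : ℝ) ≤ (j : ℝ) := by exact_mod_cast hj.1
    have hjn : (j : ℝ) ≤ N := by rw [hN]; exact_mod_cast hj.2
    set x : ℝ := Real.pi * j / P with hxdef
    have hx0 : 0 < x := by
      apply div_pos (by nlinarith) hP0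
    have hxle : x ≤ Real.pi / 2 := by
      rw [hxdef, div_le_div_iff₀ hP0 (by norm_num)]
      nlinarith
    have hx3 : x ^ 2 ≤ 3 := by nlinarith
    have hkey := inv_sin_sq_le x hx0 hx3
    have heq : 1 / x ^ 2 + 2 / 3 + x ^ 2 / 9 =
        P ^ 2 / Real.pi ^ 2 * (1 / (j : ℝ) ^ 2) + 2 / 3 + Real.pi ^ 2 / (9 * P ^ 2) * (j : ℝ) ^ 2 := by
      rw [hxdef]
      field_simp
    linarith [hkey, heq.le]
  have hsum := Finset.sum_le_sum hterm
  have hsplit : ∑ j ∈ Icc 2 n, (P ^ 2 / Real.pi ^ 2 * (1 / (j : ℝ) ^ 2) + 2 / 3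
        + Real.pi ^ 2 / (9 * P ^ 2) * (j : ℝ) ^ 2)
      = P ^ 2 / Real.pi ^ 2 * (∑ j ∈ Icc 2 n, (1 : ℝ) / (j : ℝ) ^ 2)
        + (2 / 3) * (N - 1)
        + Real.pi ^ 2 / (9 * P ^ 2) * (∑ j ∈ Icc 2 n, ((j : ℝ)) ^ 2) := by
    rw [Finset.sum_add_distrib, Finset.sum_add_distrib, Finset.mul_sum, Finset.mul_sum,
      Finset.sum_const, Nat.card_Icc]
    have : ((n + 1 - 2 : ℕ) : ℝ) = N - 1 := by
      rw [hN, show n + 1 - 2 = n - 1 from by omega, Nat.cast_sub (by omega : 1 ≤ n)]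
      push_cast; ring
    rw [nsmul_eq_mul, this]
    ring
  have hA := sumA n (by omega)
  have hB := sumB n
  have h2N1 : 2 * N + 1 = P := hPN.symm
  -- assemble
  have hle : ∑ j ∈ Icc 2 n, 1 / Real.sin (Real.pi * j / P) ^ 2 ≤
      P ^ 2 / Real.pi ^ 2 * (2 / 3 - 2 / P) + (2 / 3) * (N - 1)
        + Real.pi ^ 2 / (9 * P ^ 2) * (N * (N + 1) * P / 6) := by
    rw [hsplit] at hsum
    have hA' : ∑ j ∈ Icc 2 n, (1 : ℝ) / (j : ℝ) ^ 2 ≤ 2 / 3 - 2 / P := by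
      rw [← h2N1]; exact hA
    have hB' : ∑ j ∈ Icc 2 n, ((j : ℝ)) ^ 2 ≤ N * (N + 1) * P / 6 := by
      rw [← h2N1]; exact hB
    have t1 : P ^ 2 / Real.pi ^ 2 * (∑ j ∈ Icc 2 n, (1 : ℝ) / (j : ℝ) ^ 2)
        ≤ P ^ 2 / Real.pi ^ 2 * (2 / 3 - 2 / P) := by
      apply mul_le_mul_of_nonneg_left hA' (by positivity)
    have t2 : Real.pi ^ 2 / (9 * P ^ 2) * (∑ j ∈ Icc 2 n, ((j : ℝ)) ^ 2)
        ≤ Real.pi ^ 2 / (9 * P ^ 2) * (N * (N + 1) * P / 6) := by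
      apply mul_le_mul_of_nonneg_left hB' (by positivity)
    linarith
  refine lt_of_le_of_lt hle ?_
  rw [← sub_pos]
  have hrw : P ^ 2 / Real.pi ^ 2 - (P ^ 2 / Real.pi ^ 2 * (2 / 3 - 2 / P) + (2 / 3) * (N - 1)
        + Real.pi ^ 2 / (9 * P ^ 2) * (N * (N + 1) * P / 6))
      = (18 * P ^ 3 + 108 * P ^ 2 - 36 * Real.pi ^ 2 * P * (N - 1)
          - Real.pi ^ 4 * N * (N + 1)) / (54 * Real.pi ^ 2 * P) := by
    field_simp
    ring
  rw [hrw]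
  apply div_pos _ (by positivity)
  have hπ2 : Real.pi ^ 2 < 9.93 := by nlinarith
  have hπ4 : Real.pi ^ 4 < 99 := by nlinarith
  rw [hPN]
  nlinarith [mul_nonneg (sub_nonneg.2 hN5) (sq_nonneg N), sq_nonneg (N - 5), hN5]
end
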